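/- arXiv:2310.08542 — 2 statements merged into one kernel-verified Lean document; each statement's English description precedes it below -/
import Mathlib

section
/- The number of cyclically reduced words of length n in a free group of rank r ≥ 2 (with respect to a fixed basis) equals (2r-1)^n + r + (-1)^n (r-1). -/
/-- A letter in the alphabet of a free group of rank `r`: a basis element together
with a sign (`true` = positive, `false` = inverse). The alphabet has `2r` letters. -/
abbrev Letter (r : ℕ) := Fin r × Bool

/-- The formal inverse of a letter. -/
def Letter.inv {r : ℕ} (x : Letter r) : Letter r := (x.1, !x.2)

/-- A word is reduced if no letter is immediately followed by its inverse. -/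
def Reduced {r : ℕ} (w : List (Letter r)) : Prop :=
  List.Chain' (fun a b => b ≠ Letter.inv a) w

/-- A word is cyclically reduced if it is reduced and its first letter is not
the inverse of its last letter. -/
def CyclicallyReduced {r : ℕ} (w : List (Letter r)) : Prop :=
  Reduced w ∧ ∀ a b, w.head? = some a → w.getLast? = some b → a ≠ Letter.inv b

/-!
A word `a₀ a₁ ⋯ aₙ` is reduced iff it is a walk in the digraph on the `2r` letters with an edge
`a → b` whenever `b ≠ a⁻¹`, and it is cyclically reduced iff that walk closes up. So the count is
`trace (M ^ n)` for the adjacency matrix `M = J - P`, where `J` is the all-ones matrix and `P` the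
permutation matrix of `a ↦ a⁻¹`. From `J² = 2r J` and `JP = PJ = J` one gets
`(J - P) ^ n = c J + (-1) ^ n P ^ n` with `2r c = (2r - 1) ^ n - (-1) ^ n`, and since `P² = 1`
and `P` has no fixed points, `trace (P ^ n)` is `2r` or `0` according to the parity of `n`.
-/

open Matrix

section ChainCount

variable {α : Type*}

instance List.finite_subtype_and_length_eq [Finite α] (P : List α → Prop) (n : ℕ) :
    Finite {l : List α // P l ∧ l.length = n} :=
  ((List.finite_length_eq α n).subset fun _ h => h.2).to_subtype

def List.subtypeLengthSuccEquiv (P : List α → Prop) (n : ℕ) :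
    {w : List α // P w ∧ w.length = n + 1} ≃ Σ a : α, {l : List α // P (a :: l) ∧ l.length = n} where
  toFun
    | ⟨a :: l, h⟩ => ⟨a, l, by simpa using h⟩
  invFun := fun ⟨a, l, h⟩ => ⟨a :: l, by simpa using h⟩
  left_inv
    | ⟨a :: l, h⟩ => rfl
  right_inv := fun ⟨a, l, h⟩ => rfl

theorem List.card_subtype_and_length_succ [Fintype α] (P : List α → Prop) (n : ℕ) :
    Nat.card {w : List α // P w ∧ w.length = n + 1} =
      ∑ a, Nat.card {l : List α // P (a :: l) ∧ l.length = n} := by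
  rw [Nat.card_congr (List.subtypeLengthSuccEquiv P n), Nat.card_sigma]

theorem Nat.card_subtype_prop_and (p : Prop) [Decidable p] (Q : α → Prop) :
    Nat.card {x // p ∧ Q x} = if p then Nat.card {x // Q x} else 0 := by
  by_cases hp : p <;> simp [hp]

variable (S : Type*) [Semiring S]

def relMatrix (R : α → α → Prop) [DecidableRel R] : Matrix α α S :=
  Matrix.of fun a b => if R a b then 1 else 0

variable [Fintype α] [DecidableEq α] (R : α → α → Prop) [DecidableRel R]

theorem card_isChain_cons_getLastD (q : α → Prop) [DecidablePred q] (n : ℕ) (a : α) :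
    (Nat.card {l : List α // ((a :: l).IsChain R ∧ q (l.getLastD a)) ∧ l.length = n} : S) =
      (relMatrix S R ^ n *ᵥ fun c => if q c then 1 else 0) a := by
  induction n generalizing a with
  | zero =>
    have hnil : ∀ l : List α, (((a :: l).IsChain R ∧ q (l.getLastD a)) ∧ l.length = 0) ↔
        (q a ∧ l = []) := by
      rintro (_ | ⟨b, l⟩) <;> simp
    rw [Nat.card_congr (Equiv.subtypeEquivRight hnil), Nat.card_subtype_prop_and]
    by_cases hq : q a <;> simp [hq]
  | succ n ih =>
    rw [List.card_subtype_and_length_succ, pow_succ', ← mulVec_mulVec]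
    push_cast
    refine Finset.sum_congr rfl fun b _ => ?_
    simp only [List.isChain_cons_cons, List.getLastD_cons, and_assoc, Nat.card_subtype_prop_and]
    by_cases h : R a b
    · simpa [h, relMatrix, and_assoc] using ih b
    · simp [h, relMatrix]

def IsCyclicChain (R : α → α → Prop) (w : List α) : Prop :=
  w.IsChain R ∧ ∀ a b, w.head? = some a → w.getLast? = some b → R b a

theorem card_isCyclicChain (n : ℕ) :
    (Nat.card {w : List α // IsCyclicChain R w ∧ w.length = n + 1} : S) =
      trace (relMatrix S R ^ (n + 1)) := by
  rw [List.card_subtype_and_length_succ]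
  push_cast
  refine Finset.sum_congr rfl fun a _ => ?_
  have hcyc : ∀ l : List α, IsCyclicChain R (a :: l) ∧ l.length = n ↔
      ((a :: l).IsChain R ∧ R (l.getLastD a) a) ∧ l.length = n := by
    simp [IsCyclicChain, List.getLast?_cons, List.getLastD_eq_getLast?]
  rw [Nat.card_congr (Equiv.subtypeEquivRight hcyc),
    card_isChain_cons_getLastD S R (fun c => R c a), pow_succ]
  simp [mulVec, dotProduct, mul_apply, relMatrix]

end ChainCount

theorem exists_sub_pow_eq_smul_add {A : Type*} [Ring A] {j p : A} {m : ℤ} (hjj : j * j = m • j)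
    (hjp : j * p = j) (hpj : p * j = j) (n : ℕ) :
    ∃ c : ℤ, m * c = (m - 1) ^ n - (-1) ^ n ∧ (j - p) ^ n = c • j + (-1) ^ n • p ^ n := by
  have hpow : ∀ k : ℕ, p ^ k * j = j := by
    intro k
    induction k with
    | zero => simp
    | succ k ih => rw [pow_succ, mul_assoc, hpj, ih]
  induction n with
  | zero => exact ⟨0, by simp⟩
  | succ n ih =>
    obtain ⟨c, hc, hcj⟩ := ih
    refine ⟨c * (m - 1) + (-1) ^ n, by linear_combination (m - 1) * hc, ?_⟩
    rw [pow_succ, hcj]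
    simp only [add_mul, mul_sub, smul_mul_assoc, hjj, hjp, hpow, pow_succ]
    module

section Involution

variable {α : Type*} {S : Type*} [Ring S]

theorem relMatrix_not (R : α → α → Prop) [DecidableRel R] :
    relMatrix S (fun a b => ¬ R a b) = of (fun _ _ => 1) - relMatrix S R := by
  ext a b
  by_cases h : R a b <;> simp [relMatrix, h]

variable [Fintype α]

theorem ones_mul_ones : (of fun _ _ => 1 : Matrix α α S) * of (fun _ _ => 1) =
    (Fintype.card α : ℤ) • of (fun _ _ => 1) := by
  ext a b
  simp [mul_apply]

theorem trace_ones : trace (of fun _ _ => 1 : Matrix α α S) = Fintype.card α := by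
  simp [trace]

variable [DecidableEq α] {f : α → α}

theorem relMatrix_eq_apply_mul_ones :
    relMatrix S (fun a b => b = f a) * of (fun _ _ => 1) = of (fun _ _ => 1) := by
  ext a b
  simp [mul_apply, relMatrix]

theorem ones_mul_relMatrix_eq_apply (hf : f.Involutive) :
    of (fun _ _ => 1) * relMatrix S (fun a b => b = f a) = of (fun _ _ => 1) := by
  ext a b
  simp [mul_apply, relMatrix, eq_comm (a := b), hf.eq_iff]

theorem relMatrix_eq_apply_mul_self (hf : f.Involutive) :
    relMatrix S (fun a b => b = f a) * relMatrix S (fun a b => b = f a) = 1 := by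
  ext a b
  rw [mul_apply, Finset.sum_eq_single (f a)]
  · simp [relMatrix, one_apply, hf a, eq_comm]
  · intro c _ hc
    simp [relMatrix, hc]
  · simp

theorem trace_relMatrix_eq_apply_pow (hf : f.Involutive) (hfix : ∀ a, f a ≠ a) (k : ℕ) :
    trace (relMatrix S (fun a b => b = f a) ^ k) = if Even k then (Fintype.card α : S) else 0 := by
  obtain ⟨i, rfl | rfl⟩ := Nat.even_or_odd' k
  · simp [pow_mul, relMatrix_eq_apply_mul_self hf, sq]
  · rw [pow_succ, pow_mul, sq, relMatrix_eq_apply_mul_self hf, one_pow, one_mul]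
    simp [trace, relMatrix, fun a => (hfix a).symm]

end Involution

section FreeGroupWords

variable {r : ℕ}

theorem Letter.inv_involutive : Function.Involutive (Letter.inv : Letter r → Letter r) :=
  fun x => by simp [Letter.inv]

theorem Letter.inv_ne_self (x : Letter r) : x.inv ≠ x := by
  simp [Letter.inv, Prod.ext_iff]

theorem cyclicallyReduced_iff_isCyclicChain (w : List (Letter r)) :
    CyclicallyReduced w ↔ IsCyclicChain (fun a b => b ≠ a.inv) w :=
  Iff.rfl

theorem trace_relMatrix_ne_inv_pow (k : ℕ) :
    trace (relMatrix ℤ (fun a b : Letter r => b ≠ a.inv) ^ k) =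
      (2 * (r : ℤ) - 1) ^ k + r + (-1) ^ k * ((r : ℤ) - 1) := by
  have hcard : (Fintype.card (Letter r) : ℤ) = 2 * r := by simp [mul_comm]
  obtain ⟨c, hc, hpow⟩ := exists_sub_pow_eq_smul_add (A := Matrix (Letter r) (Letter r) ℤ)
    ones_mul_ones (ones_mul_relMatrix_eq_apply Letter.inv_involutive)
    (relMatrix_eq_apply_mul_ones (f := Letter.inv)) k
  rw [hcard] at hc
  rw [relMatrix_not, hpow, trace_add, trace_smul, trace_smul, trace_ones,
    trace_relMatrix_eq_apply_pow Letter.inv_involutive Letter.inv_ne_self, hcard, smul_eq_mul,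
    smul_eq_mul]
  rcases Nat.even_or_odd k with hk | hk
  · rw [if_pos hk]
    rw [hk.neg_one_pow] at hc ⊢
    linear_combination hc
  · rw [if_neg (Nat.not_even_iff_odd.mpr hk)]
    rw [hk.neg_one_pow] at hc ⊢
    linear_combination hc

end FreeGroupWords

theorem stmt0_general (r n : ℕ) (hn : 1 ≤ n) :
    (Nat.card {w : List (Letter r) // CyclicallyReduced w ∧ w.length = n} : ℤ)
      = (2 * (r : ℤ) - 1) ^ n + (r : ℤ) + (-1) ^ n * ((r : ℤ) - 1) := by
  obtain ⟨k, rfl⟩ := Nat.exists_eq_add_of_le' hn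
  simp only [cyclicallyReduced_iff_isCyclicChain]
  rw [card_isCyclicChain, trace_relMatrix_ne_inv_pow]

/-- The number of cyclically reduced words of length `n ≥ 1` in a free group of rank
`r ≥ 2` equals `(2r-1)^n + r + (-1)^n (r-1)`. -/
theorem stmt0 (r n : ℕ) (hr : 2 ≤ r) (hn : 1 ≤ n) :
    (Nat.card {w : List (Letter r) // CyclicallyReduced w ∧ w.length = n} : ℤ)
      = (2 * (r : ℤ) - 1) ^ n + (r : ℤ) + (-1) ^ n * ((r : ℤ) - 1) :=
  stmt0_general r n hn
end

section
/- For a cyclically reduced word w of length k in a free group of rank r ≥ 2, the number of reduced words of length n whose cyclic reduction is w equals (2r-2)(2r-1)^{(n-k)/2 - 1} if n > k and n - k is even, equals 1 if n = k, and equals 0 if n - k is odd or n < k. -/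
/-- `CyclicReductionOf w u` holds if `u` is a reduced word whose cyclic reduction is the
cyclically reduced word `w`, i.e. `u = a⁻¹ w a` as a reduced product for some word `a`. -/
def CyclicReductionOf {r : ℕ} (w u : List (Letter r)) : Prop :=
  CyclicallyReduced w ∧ Reduced u ∧
    ∃ a : List (Letter r), u = (a.map Letter.inv).reverse ++ w ++ a


/-!
Every `u` with cyclic reduction `w` is `a⁻¹ w a` for a unique `a`, of length `(|u| - |w|) / 2`.
This conjugate is reduced exactly when `a` is reduced and its first letter is neither the first
letter of `w` nor the inverse of the last one; these two letters differ because `w` is cyclically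
reduced. That leaves `2r - 2` choices for the first letter of `a` and `2r - 1` for each later one.
-/

namespace Letter

variable {r : ℕ}

@[simp] lemma inv_inv (x : Letter r) : x.inv.inv = x := by
  simp [Letter.inv]

lemma card_eq : Fintype.card (Letter r) = 2 * r := by
  simp [mul_comm]

end Letter

section Counting

variable {r : ℕ}

instance finite_subtype_length_eq {α : Type*} [Finite α] (m : ℕ) (P : List α → Prop) :
    Finite {a : List α // a.length = m ∧ P a} :=
  ((List.finite_length_eq α m).subset fun _ ha => ha.1).to_subtype

lemma reduced_iff_isChain {w : List (Letter r)} :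
    Reduced w ↔ w.IsChain (fun a b => b ≠ a.inv) := Iff.rfl

lemma reduced_cons_iff {x : Letter r} {a : List (Letter r)} :
    Reduced (x :: a) ↔ Reduced a ∧ ∀ b ∈ a.head?, b ≠ x.inv := by
  rw [reduced_iff_isChain, List.isChain_cons, and_comm]; rfl

lemma reduced_append_iff {u v : List (Letter r)} :
    Reduced (u ++ v) ↔ Reduced u ∧ Reduced v ∧ ∀ x ∈ u.getLast?, ∀ y ∈ v.head?, y ≠ x.inv :=
  List.isChain_append

lemma reduced_reverse_map_inv_iff {a : List (Letter r)} :
    Reduced (a.map Letter.inv).reverse ↔ Reduced a := by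
  simp only [reduced_iff_isChain, List.isChain_reverse, List.isChain_map]
  exact List.IsChain.iff fun x y => by rw [Letter.inv_inv, ne_comm]

lemma card_length_eq_zero {α : Type*} {P : List α → Prop} (h : P []) :
    Nat.card {a : List α // a.length = 0 ∧ P a} = 1 :=
  Nat.card_eq_one_iff_exists.mpr
    ⟨⟨[], rfl, h⟩, fun ⟨_, ha, _⟩ => Subtype.ext (List.eq_nil_of_length_eq_zero ha)⟩

lemma card_reduced_succ_head_mem_of_card_cons (S : Finset (Letter r)) {m N : ℕ}
    (h : ∀ b, Nat.card {t : List (Letter r) // t.length = m ∧ Reduced (b :: t)} = N) :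
    Nat.card {a : List (Letter r) // a.length = m + 1 ∧ Reduced a ∧ ∀ b ∈ a.head?, b ∈ S}
      = S.card * N := by
  let e : {a : List (Letter r) // a.length = m + 1 ∧ Reduced a ∧ ∀ b ∈ a.head?, b ∈ S} ≃
      Σ b : S, {t : List (Letter r) // t.length = m ∧ Reduced (b.1 :: t)} :=
    { toFun := fun
        | ⟨b :: t, ha, hr, hS⟩ => ⟨⟨b, hS b rfl⟩, t, Nat.succ.inj ha, hr⟩
      invFun := fun ⟨⟨b, hb⟩, t, ht, hr⟩ => ⟨b :: t, by simp [ht], hr, by simpa using hb⟩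
      left_inv := fun | ⟨_ :: _, _, _, _⟩ => rfl
      right_inv := fun ⟨⟨_, _⟩, _, _, _⟩ => rfl }
  simp only [Nat.card_congr e, Nat.card_sigma, h, Finset.sum_const, Finset.card_univ,
    Fintype.card_coe, smul_eq_mul]

lemma card_reduced_cons (x : Letter r) (m : ℕ) :
    Nat.card {a : List (Letter r) // a.length = m ∧ Reduced (x :: a)} = (2 * r - 1) ^ m := by
  induction m generalizing x with
  | zero => exact card_length_eq_zero (List.isChain_singleton x)
  | succ m ih =>
    calc Nat.card {a : List (Letter r) // a.length = m + 1 ∧ Reduced (x :: a)}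
        = Nat.card {a : List (Letter r) // a.length = m + 1 ∧ Reduced a ∧
            ∀ b ∈ a.head?, b ∈ ({x.inv}ᶜ : Finset (Letter r))} := by
          simp only [reduced_cons_iff, Finset.mem_compl, Finset.mem_singleton]
      _ = ({x.inv}ᶜ : Finset (Letter r)).card * (2 * r - 1) ^ m :=
          card_reduced_succ_head_mem_of_card_cons _ ih
      _ = (2 * r - 1) ^ (m + 1) := by
          rw [Finset.card_compl, Finset.card_singleton, Letter.card_eq, pow_succ, mul_comm]

lemma card_reduced_succ_head_mem (S : Finset (Letter r)) (m : ℕ) :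
    Nat.card {a : List (Letter r) // a.length = m + 1 ∧ Reduced a ∧ ∀ b ∈ a.head?, b ∈ S}
      = S.card * (2 * r - 1) ^ m :=
  card_reduced_succ_head_mem_of_card_cons S (card_reduced_cons · m)

end Counting

section Conjugation

variable {r : ℕ} {w : List (Letter r)}

lemma reduced_conj_iff (hw : CyclicallyReduced w) (hne : w ≠ []) (a : List (Letter r)) :
    Reduced ((a.map Letter.inv).reverse ++ w ++ a) ↔ Reduced a ∧
      ∀ b ∈ a.head?, b ∈ ({w.head hne, (w.getLast hne).inv}ᶜ : Finset (Letter r)) := by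
  simp only [reduced_append_iff, reduced_reverse_map_inv_iff, List.getLast?_append,
    List.getLast?_reverse, List.getLast?_eq_some_getLast hne, List.head?_eq_some_head hne,
    List.head?_map, Option.some_or, Option.mem_some_iff, Option.mem_map, forall_eq',
    forall_exists_index, and_imp, forall_apply_eq_imp_iff₂, Letter.inv_inv, Finset.mem_compl,
    Finset.mem_insert, Finset.mem_singleton, not_or, hw.1, true_and]
  grind

lemma length_conj (a : List (Letter r)) :
    ((a.map Letter.inv).reverse ++ w ++ a).length = w.length + 2 * a.length := by
  simp only [List.length_append, List.length_reverse, List.length_map]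
  omega

lemma card_cyclicReductionOf_length_eq (hw : CyclicallyReduced w) (hne : w ≠ []) (m : ℕ) :
    Nat.card {u : List (Letter r) // u.length = w.length + 2 * m ∧ CyclicReductionOf w u}
      = Nat.card {a : List (Letter r) // a.length = m ∧ Reduced a ∧
          ∀ b ∈ a.head?, b ∈ ({w.head hne, (w.getLast hne).inv}ᶜ : Finset (Letter r))} := by
  symm
  refine Nat.card_eq_of_bijective (fun a => ⟨(a.1.map Letter.inv).reverse ++ w ++ a.1,
      by rw [length_conj, a.2.1], hw, (reduced_conj_iff hw hne a.1).mpr a.2.2, a.1, rfl⟩) ⟨?_, ?_⟩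
  · intro ⟨a, ha, _⟩ ⟨a', ha', _⟩ h
    exact Subtype.ext (List.append_inj_right' (Subtype.mk.inj h) (ha.trans ha'.symm))
  · rintro ⟨u, hu, -, hred, a, rfl⟩
    refine ⟨⟨a, ?_, (reduced_conj_iff hw hne a).mp hred⟩, rfl⟩
    rw [length_conj] at hu
    omega

end Conjugation

theorem stmt1_general (r k n : ℕ) (hk : 1 ≤ k)
    (w : List (Letter r)) (hw : CyclicallyReduced w) (hwk : w.length = k) :
    Nat.card {u : List (Letter r) // u.length = n ∧ CyclicReductionOf w u}
      = if n = k then 1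
        else if k < n ∧ (n - k) % 2 = 0 then (2 * r - 2) * (2 * r - 1) ^ ((n - k) / 2 - 1)
        else 0 := by
  have hne : w ≠ [] := List.ne_nil_of_length_pos (hwk ▸ hk)
  by_cases hn : ∃ m, n = k + 2 * m
  · obtain ⟨m, rfl⟩ := hn
    rw [← hwk, card_cyclicReductionOf_length_eq hw hne]
    rcases m with _ | m
    · rw [card_length_eq_zero ⟨List.isChain_nil, by simp⟩, if_pos (by omega)]
    · have hS : ({w.head hne, (w.getLast hne).inv}ᶜ : Finset (Letter r)).card = 2 * r - 2 := by
        rw [Finset.card_compl, Finset.card_pair (hw.2 _ _ (List.head?_eq_some_head hne)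
          (List.getLast?_eq_some_getLast hne)), Letter.card_eq]
      rw [card_reduced_succ_head_mem, hS, if_neg (by omega), if_pos (by omega)]
      congr 2
      omega
  · rw [if_neg fun h => hn ⟨0, by omega⟩, if_neg fun h => hn ⟨(n - k) / 2, by omega⟩]
    refine Nat.card_eq_zero.mpr (.inl ⟨fun ⟨u, hu, _, _, a, hua⟩ => hn ⟨a.length, ?_⟩⟩)
    rw [← hu, hua, length_conj, hwk]

/-- For a cyclically reduced word `w` of length `k ≥ 1` in a free group of rank `r ≥ 2`,
the number of reduced words of length `n` whose cyclic reduction is `w` equals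
`(2r-2)(2r-1)^{(n-k)/2 - 1}` if `n > k` and `n - k` is even, `1` if `n = k`, and `0`
otherwise (i.e. if `n < k` or `n - k` is odd). -/
theorem stmt1 (r k n : ℕ) (hr : 2 ≤ r) (hk : 1 ≤ k)
    (w : List (Letter r)) (hw : CyclicallyReduced w) (hwk : w.length = k) :
    Nat.card {u : List (Letter r) // u.length = n ∧ CyclicReductionOf w u}
      = if n = k then 1
        else if k < n ∧ (n - k) % 2 = 0 then (2 * r - 2) * (2 * r - 1) ^ ((n - k) / 2 - 1)
        else 0 :=
  stmt1_general r k n hk w hw hwk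
end
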